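/- arXiv:1108.4958 — 2 statements merged into one kernel-verified Lean document; each statement's English description precedes it below -/
import Mathlib

section
/- Fix w ∈ S_∞. Define A = {(v,α) ∈ S_∞ × Φ^+ : v ≤_L w and α ∈ B_v} and B = {(u,α) ∈ S_∞ × Φ^+ : u ≤_L w s_α and α ∈ B_w}. Then the map (v,α) ↦ (v s_α, α) is a well-defined bijection from A to B. In particular, for (v,α) ∈ A one has v s_α ≤_L w s_α and ℓ(w s_α) = ℓ(w) + 1 - ⟨α^∨, 2ρ⟩. -/
open scoped BigOperators

noncomputable section

/-- Variable names for the ambient polynomial ring `ℤ[x;q;a]`: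
`Var.x i` denotes the variable `x_{i+1}`, `Var.q i` denotes `q_{i+1}`,
and `Var.a i` denotes `a_{i+1}` (so that there are no spurious variables). -/
inductive Var : Type
  | x : ℕ → Var
  | q : ℕ → Var
  | a : ℕ → Var
  deriving DecidableEq

/-- The ambient polynomial ring `ℤ[x;q;a]` in the variables
`x₁,x₂,…; q₁,q₂,…; a₁,a₂,…`. -/
abbrev R : Type := MvPolynomial Var ℤ

/-- The fraction field of `R`. -/
abbrev F : Type := FractionRing R

/-- The variable `x_i` (for `i ≥ 1`). -/
def Xx (i : ℕ) : R := MvPolynomial.X (Var.x (i - 1))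
/-- The variable `q_i` (for `i ≥ 1`). -/
def Qq (i : ℕ) : R := MvPolynomial.X (Var.q (i - 1))
/-- The variable `a_i` (for `i ≥ 1`). -/
def Aa (i : ℕ) : R := MvPolynomial.X (Var.a (i - 1))

def toF : R →+* F := algebraMap R F

/-- The ring automorphism `sᵢᵃ` of `R` exchanging the variables `a_i` and `a_{i+1}`
(meaningful for `i ≥ 1`). -/
def swapA (i : ℕ) : R ≃+* R :=
  (MvPolynomial.renameEquiv ℤ (Equiv.swap (Var.a (i - 1)) (Var.a i))).toRingEquiv

/-- The extension of `sᵢᵃ` to the fraction field. -/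
def swapAF (i : ℕ) : F ≃+* F := IsFractionRing.ringEquivOfRingEquiv (swapA i)

/-- The divided difference operator `∂ᵢᵃ = (aᵢ - aᵢ₊₁)⁻¹(1 - sᵢᵃ)` in the `a`-variables. -/
def dd (i : ℕ) (f : F) : F := (f - swapAF i f) / (toF (Aa i) - toF (Aa (i + 1)))

/-- Iterated divided differences along a word (the head of the list acting last), so that
`ddWord [i₁, …, i_ℓ] = ∂_{i₁} ∘ ⋯ ∘ ∂_{i_ℓ}`. -/
def ddWord : List ℕ → F → F
  | [], f => f
  | i :: l, f => dd i (ddWord l f)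

abbrev Perm : Type := Equiv.Perm ℕ

/-- The simple transposition `sᵢ = (i, i+1)` (meaningful for `i ≥ 1`). -/
def sTrans (i : ℕ) : Perm := Equiv.swap i (i + 1)

/-- The transposition `(i, j)`; for `1 ≤ i < j` this is the reflection `s_{α_{ij}}`. -/
def transp (i j : ℕ) : Perm := Equiv.swap i j

/-- The number of inversions (the Coxeter length `ℓ`) of a permutation. -/
def len (w : Perm) : ℕ := Set.ncard {p : ℕ × ℕ | p.1 < p.2 ∧ w p.2 < w p.1}

/-- `w` lies in `S_n`: it permutes `{1,…,n}`, fixing `0` and all `i > n`. -/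
def InSn (n : ℕ) (w : Perm) : Prop := w 0 = 0 ∧ ∀ i, n < i → w i = i

/-- `w` lies in `S_∞ = ⋃ₙ Sₙ`. -/
def InSinf (w : Perm) : Prop := ∃ n, InSn n w

/-- `l` is a reduced word for `w`: `w = s_{i₁} ⋯ s_{i_ℓ}` with `ℓ = ℓ(w)`,
all letters being `≥ 1`. -/
def IsReducedWord (w : Perm) (l : List ℕ) : Prop :=
  (∀ i ∈ l, 1 ≤ i) ∧ w = (l.map sTrans).prod ∧ l.length = len w

/-- The longest element `w₀⁽ⁿ⁾` of `S_n`, i.e. `i ↦ n+1-i` on `{1,…,n}`. -/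
def w0 (n : ℕ) : Perm :=
  Function.Involutive.toPerm (fun i => if 1 ≤ i ∧ i ≤ n then n + 1 - i else i)
    (by intro i; dsimp only; split_ifs <;> omega)

/-- The left weak order on `S_∞`: `v ≤_L w` iff `ℓ(w v⁻¹) + ℓ(v) = ℓ(w)`. -/
def LeftWeakLe (v w : Perm) : Prop :=
  InSinf v ∧ InSinf w ∧ len (w * v⁻¹) + len v = len w

/-- The code of a permutation: `code w i = #{j > i : w j < w i}`. -/
def code (w : Perm) (i : ℕ) : ℕ := Set.ncard {j : ℕ | i < j ∧ w j < w i}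

/-- The set `B_v` of positive roots `α = α_{ab}` (encoded as pairs `(a,b)`, `1 ≤ a < b`)
with `ℓ(v s_α) = ℓ(v) + 1 - ⟨α^∨, 2ρ⟩`, where `⟨α_{ab}^∨, 2ρ⟩ = 2(b - a)`. -/
def Bset (v : Perm) : Set (ℕ × ℕ) :=
  {α | 1 ≤ α.1 ∧ α.1 < α.2 ∧
    (len (v * transp α.1 α.2) : ℤ) = (len v : ℤ) + 1 - 2 * ((α.2 : ℤ) - (α.1 : ℤ))}


/-! The set `B_v` is the set of `α` with `s_α ≤_L v`, because `ℓ(s_{α_{ab}}) = 2(b - a) - 1`.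
Since `ℓ` is subadditive, a factorisation `w = x · v` with `ℓ(w) = ℓ(x) + ℓ(v)` and
`v = (v s_α) · s_α` with `ℓ(v) = ℓ(v s_α) + ℓ(s_α)` squeezes `ℓ(w s_α)` between
`ℓ(w) - ℓ(s_α)` and `ℓ(x) + ℓ(v s_α)`, which coincide; this proves `v s_α ≤_L w s_α` and
`α ∈ B_w`. The same squeeze run backwards gives the inverse map. -/

def inversions (w : Perm) : Set (ℕ × ℕ) := {p | p.1 < p.2 ∧ w p.2 < w p.1}

lemma len_eq_ncard_inversions (w : Perm) : len w = (inversions w).ncard := rfl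

lemma InSn.mul {m n : ℕ} {u v : Perm} (hu : InSn m u) (hv : InSn n v) :
    InSn (max m n) (u * v) :=
  ⟨by simp [hv.1, hu.1], fun i hi => by
    rw [Equiv.Perm.mul_apply, hv.2 i (by omega), hu.2 i (by omega)]⟩

lemma InSn.inv {n : ℕ} {w : Perm} (h : InSn n w) : InSn n w⁻¹ :=
  ⟨by rw [Equiv.Perm.inv_eq_iff_eq, h.1], fun i hi => by rw [Equiv.Perm.inv_eq_iff_eq, h.2 i hi]⟩

lemma inSn_transp {a b : ℕ} (ha : 1 ≤ a) (hab : a < b) : InSn b (transp a b) :=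
  ⟨Equiv.swap_apply_of_ne_of_ne (by omega) (by omega),
    fun _ _ => Equiv.swap_apply_of_ne_of_ne (by omega) (by omega)⟩

lemma InSinf.mul {u v : Perm} (hu : InSinf u) (hv : InSinf v) : InSinf (u * v) :=
  let ⟨_, hm⟩ := hu; let ⟨_, hn⟩ := hv; ⟨_, hm.mul hn⟩

lemma InSinf.inv {w : Perm} (h : InSinf w) : InSinf w⁻¹ :=
  let ⟨n, hn⟩ := h; ⟨n, hn.inv⟩

lemma inSinf_transp {a b : ℕ} (ha : 1 ≤ a) (hab : a < b) : InSinf (transp a b) :=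
  ⟨b, inSn_transp ha hab⟩

lemma InSinf.finite_inversions {w : Perm} (h : InSinf w) : (inversions w).Finite := by
  obtain ⟨n, -, hfix⟩ := h
  refine ((Set.finite_Iic n).prod (Set.finite_Iic n)).subset ?_
  rintro ⟨i, j⟩ ⟨hij, hw : w j < w i⟩
  -- if `j > n` then `w j = j < w i`, so `w i > n`, and then `w (w i) = w i` forces `w i = i < j`
  have hj : j ≤ n := by
    by_contra! hj
    rw [hfix j hj] at hw
    have := w.injective (hfix (w i) (by omega))
    omega
  exact ⟨by simp; omega, hj⟩

/-- The inversions of `u * v` are inversions of `v` or pulled back from inversions of `u`. -/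
lemma len_mul_le {u v : Perm} (hu : (inversions u).Finite) (hv : (inversions v).Finite) :
    len (u * v) ≤ len u + len v := by
  have hsub : inversions (u * v) ⊆ inversions v ∪ Prod.map v v ⁻¹' inversions u := by
    rintro ⟨i, j⟩ ⟨hij, huv⟩
    rcases lt_trichotomy (v j) (v i) with h | h | h
    · exact Or.inl ⟨hij, h⟩
    · exact absurd (v.injective h) hij.ne'
    · exact Or.inr ⟨h, huv⟩
  have hinj : Function.Injective (Prod.map v v) := v.injective.prodMap v.injective
  have hrange : inversions u ⊆ Set.range (Prod.map v v) :=
    fun p _ => ⟨(v⁻¹ p.1, v⁻¹ p.2), by simp⟩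
  calc len (u * v) ≤ (inversions v ∪ Prod.map v v ⁻¹' inversions u).ncard :=
        Set.ncard_le_ncard hsub (hv.union (hu.preimage hinj.injOn))
    _ ≤ len v + (Prod.map v v ⁻¹' inversions u).ncard := Set.ncard_union_le _ _
    _ = len u + len v := by
        rw [Set.ncard_preimage_of_injective_subset_range hinj hrange, add_comm]; rfl

lemma len_inv (w : Perm) : len w⁻¹ = len w := by
  have hinv : inversions w⁻¹ = (fun p => (w p.2, w p.1)) '' inversions w := by
    ext ⟨i, j⟩
    constructor
    · rintro ⟨hij, hw⟩
      exact ⟨(w⁻¹ j, w⁻¹ i), ⟨hw, by simpa using hij⟩, by simp⟩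
    · rintro ⟨⟨k, l⟩, ⟨hkl, hw⟩, hp⟩
      simp only [Prod.mk.injEq] at hp
      obtain ⟨rfl, rfl⟩ := hp
      exact ⟨hw, by simpa using hkl⟩
  have hinj : Function.Injective fun p : ℕ × ℕ => (w p.2, w p.1) := by
    rintro ⟨i, j⟩ ⟨k, l⟩ h
    simp only [Prod.mk.injEq, EmbeddingLike.apply_eq_iff_eq] at h
    simp [h.1, h.2]
  rw [len_eq_ncard_inversions, len_eq_ncard_inversions, hinv, Set.ncard_image_of_injective _ hinj]

lemma InSinf.len_mul_le {u v : Perm} (hu : InSinf u) (hv : InSinf v) :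
    len (u * v) ≤ len u + len v :=
  _root_.len_mul_le hu.finite_inversions hv.finite_inversions

lemma inversions_transp {a b : ℕ} (hab : a < b) :
    inversions (transp a b) = (a, ·) '' Set.Ioc a b ∪ (·, b) '' Set.Ioo a b := by
  ext ⟨i, j⟩
  simp only [inversions, transp, Set.mem_ofPred_eq, Set.mem_union, Set.mem_image, Set.mem_Ioc,
    Set.mem_Ioo, Prod.mk.injEq, Equiv.swap_apply_def]
  constructor
  · intro h
    split_ifs at h
    all_goals first
      | exact Or.inl ⟨j, by omega, by omega, rfl⟩
      | exact Or.inr ⟨i, by omega, rfl, by omega⟩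
  · rintro (⟨c, hc, rfl, rfl⟩ | ⟨c, hc, rfl, rfl⟩) <;> split_ifs <;> omega

lemma len_transp {a b : ℕ} (hab : a < b) : len (transp a b) = 2 * (b - a) - 1 := by
  have hdisj : Disjoint ((a, ·) '' Set.Ioc a b) ((·, b) '' Set.Ioo a b) := by
    rw [Set.disjoint_left]
    rintro _ ⟨c, hc, rfl⟩ ⟨d, hd, hdc⟩
    simp only [Prod.mk.injEq] at hdc
    simp only [Set.mem_Ioo] at hd
    omega
  rw [len_eq_ncard_inversions, inversions_transp hab, Set.ncard_union_eq hdisj,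
    Set.ncard_image_of_injective _ (Prod.mk_right_injective a),
    Set.ncard_image_of_injective _ (Prod.mk_left_injective b), Set.ncard_Ioc_nat,
    Set.ncard_Ioo_nat]
  omega

lemma mem_Bset_iff {v : Perm} {α : ℕ × ℕ} :
    α ∈ Bset v ↔ 1 ≤ α.1 ∧ α.1 < α.2 ∧
      len (v * transp α.1 α.2) + len (transp α.1 α.2) = len v := by
  simp only [Bset, Set.mem_ofPred_eq]
  constructor
  · rintro ⟨ha, hab, h⟩
    exact ⟨ha, hab, by rw [len_transp hab]; omega⟩
  · rintro ⟨ha, hab, h⟩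
    exact ⟨ha, hab, by rw [len_transp hab] at h; omega⟩

lemma LeftWeakLe.mul_right {v w t : Perm} (hvw : LeftWeakLe v w) (ht : InSinf t)
    (hvt : len (v * t) + len t = len v) :
    LeftWeakLe (v * t) (w * t) ∧ len (w * t) + len t = len w := by
  obtain ⟨hv, hw, hlen⟩ := hvw
  have hquot : w * t * (v * t)⁻¹ = w * v⁻¹ := by group
  have hupper : len (w * t) ≤ len (w * v⁻¹) + len (v * t) := by
    simpa [mul_assoc] using (hw.mul hv.inv).len_mul_le (hv.mul ht)
  have hlower : len w ≤ len (w * t) + len t := by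
    simpa [mul_assoc, len_inv] using (hw.mul ht).len_mul_le ht.inv
  exact ⟨⟨hv.mul ht, hw.mul ht, by rw [hquot]; omega⟩, by omega⟩

lemma LeftWeakLe.mul_inv_right {u w t : Perm} (hut : LeftWeakLe u (w * t)) (ht : InSinf t)
    (hwt : len (w * t) + len t = len w) :
    LeftWeakLe (u * t⁻¹) w ∧ len (u * t⁻¹) = len u + len t := by
  obtain ⟨hu, hwt', hlen⟩ := hut
  have hw : InSinf w := by simpa using hwt'.mul ht.inv
  have hquot : w * (u * t⁻¹)⁻¹ = w * t * u⁻¹ := by group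
  have hupper : len w ≤ len (w * t * u⁻¹) + len (u * t⁻¹) := by
    simpa [mul_assoc] using (hwt'.mul hu.inv).len_mul_le (hu.mul ht.inv)
  have hsplit : len (u * t⁻¹) ≤ len u + len t := by
    simpa [len_inv] using hu.len_mul_le ht.inv
  exact ⟨⟨hu.mul ht.inv, hw, by rw [hquot]; omega⟩, by omega⟩

lemma mul_transp_mul_transp (v : Perm) (a b : ℕ) : v * transp a b * transp a b = v := by
  simp [transp, mul_assoc]

lemma LeftWeakLe.mul_transp_of_mem_Bset {v w : Perm} {α : ℕ × ℕ} (hvw : LeftWeakLe v w)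
    (hα : α ∈ Bset v) :
    LeftWeakLe (v * transp α.1 α.2) (w * transp α.1 α.2) ∧ α ∈ Bset w := by
  obtain ⟨ha, hab, hvt⟩ := mem_Bset_iff.mp hα
  obtain ⟨hle, hwt⟩ := hvw.mul_right (inSinf_transp ha hab) hvt
  exact ⟨hle, mem_Bset_iff.mpr ⟨ha, hab, hwt⟩⟩

lemma LeftWeakLe.mul_transp_of_mem_Bset_right {u w : Perm} {α : ℕ × ℕ}
    (hu : LeftWeakLe u (w * transp α.1 α.2)) (hα : α ∈ Bset w) :
    LeftWeakLe (u * transp α.1 α.2) w ∧ α ∈ Bset (u * transp α.1 α.2) := by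
  obtain ⟨ha, hab, hwt⟩ := mem_Bset_iff.mp hα
  obtain ⟨hle, hut⟩ := hu.mul_inv_right (inSinf_transp ha hab) hwt
  rw [transp, Equiv.swap_inv, ← transp] at hle hut
  refine ⟨hle, mem_Bset_iff.mpr ⟨ha, hab, ?_⟩⟩
  rw [mul_transp_mul_transp, hut]

theorem quantum_correction_bijection_general (w : Perm) :
    Set.BijOn (fun p : Perm × (ℕ × ℕ) => (p.1 * transp p.2.1 p.2.2, p.2))
      {p : Perm × (ℕ × ℕ) | LeftWeakLe p.1 w ∧ p.2 ∈ Bset p.1}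
      {p : Perm × (ℕ × ℕ) | LeftWeakLe p.1 (w * transp p.2.1 p.2.2) ∧ p.2 ∈ Bset w} ∧
    ∀ p : Perm × (ℕ × ℕ), (LeftWeakLe p.1 w ∧ p.2 ∈ Bset p.1) →
      (LeftWeakLe (p.1 * transp p.2.1 p.2.2) (w * transp p.2.1 p.2.2) ∧
        (len (w * transp p.2.1 p.2.2) : ℤ) =
          (len w : ℤ) + 1 - 2 * ((p.2.2 : ℤ) - (p.2.1 : ℤ))) := by
  have forward : ∀ p : Perm × (ℕ × ℕ), LeftWeakLe p.1 w ∧ p.2 ∈ Bset p.1 →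
      LeftWeakLe (p.1 * transp p.2.1 p.2.2) (w * transp p.2.1 p.2.2) ∧ p.2 ∈ Bset w :=
    fun p hp => hp.1.mul_transp_of_mem_Bset hp.2
  have involutive : ∀ p : Perm × (ℕ × ℕ),
      (p.1 * transp p.2.1 p.2.2 * transp p.2.1 p.2.2, p.2) = p :=
    fun p => by rw [mul_transp_mul_transp]
  exact ⟨Set.InvOn.bijOn (f' := fun p => (p.1 * transp p.2.1 p.2.2, p.2))
    ⟨fun p _ => involutive p, fun p _ => involutive p⟩ forward
    (fun p hp => hp.1.mul_transp_of_mem_Bset_right hp.2),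
    fun p hp => ⟨(forward p hp).1, (forward p hp).2.2.2⟩⟩

/-- for fixed `w ∈ S_∞`, with
`A = {(v,α) : v ≤_L w, α ∈ B_v}` and `B = {(u,α) : u ≤_L w s_α, α ∈ B_w}`,
the map `(v,α) ↦ (v s_α, α)` is a well-defined bijection from `A` to `B`; in particular,
for `(v,α) ∈ A` one has `v s_α ≤_L w s_α` and `ℓ(w s_α) = ℓ(w) + 1 - ⟨α^∨, 2ρ⟩`. -/
theorem quantum_correction_bijection (w : Perm) (hw : InSinf w) :
    Set.BijOn (fun p : Perm × (ℕ × ℕ) => (p.1 * transp p.2.1 p.2.2, p.2))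
      {p : Perm × (ℕ × ℕ) | LeftWeakLe p.1 w ∧ p.2 ∈ Bset p.1}
      {p : Perm × (ℕ × ℕ) | LeftWeakLe p.1 (w * transp p.2.1 p.2.2) ∧ p.2 ∈ Bset w} ∧
    ∀ p : Perm × (ℕ × ℕ), (LeftWeakLe p.1 w ∧ p.2 ∈ Bset p.1) →
      (LeftWeakLe (p.1 * transp p.2.1 p.2.2) (w * transp p.2.1 p.2.2) ∧
        (len (w * transp p.2.1 p.2.2) : ℤ) =
          (len w : ℤ) + 1 - 2 * ((p.2.2 : ℤ) - (p.2.1 : ℤ))) :=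
  quantum_correction_bijection_general w
end
end

section
/- Let β = (β_1,...,β_n) ∈ Z_{≥0}^n satisfy β_i ≤ n-i for 2 ≤ i ≤ n. Then ∂_{n-1}^a ⋯ ∂_2^a ∂_1^a (a^β) = 0 if β_1 < n-1, and ∂_{n-1}^a ⋯ ∂_2^a ∂_1^a (a^β) = a_1^{β_2} a_2^{β_3} ⋯ a_{n-1}^{β_n} if β_1 = n-1, where a^β = a_1^{β_1} ⋯ a_n^{β_n}. -/
open scoped BigOperators

noncomputable section

/-!
Induct on the length of the word, peeling off `∂_k`, which is applied first. Writing the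
monomial as `a_k^p a_{k+1}^q g` with `g` symmetric in `a_k, a_{k+1}`, the operator `∂_k` turns
it into `±∑ a_k^c a_{k+1}^e g` with `e < max p q`. The remaining operators
`∂_{k+m-1} ⋯ ∂_{k+1}` commute with multiplication by `a_k`, and by induction they kill
`a_{k+1}^e g` for `e < m` and send `a_{k+1}^m g` to the shifted monomial. Since `q ≤ m`,
exponent `e = m` occurs only when `p = m + 1`, and then only in the single term
`a_k^q a_{k+1}^m g`.
-/

open Finset

lemma swapAF_toF (i : ℕ) (g : R) : swapAF i (toF g) = toF (swapA i g) :=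
  IsFractionRing.ringEquivOfRingEquiv_algebraMap _ g

lemma swapA_apply (i : ℕ) (g : R) :
    swapA i g = MvPolynomial.rename (Equiv.swap (Var.a (i - 1)) (Var.a i)) g := rfl

lemma swapA_swapA (i : ℕ) (g : R) : swapA i (swapA i g) = g := by
  rw [swapA_apply, swapA_apply, MvPolynomial.rename_rename,
    Function.Involutive.comp_self (Equiv.swap_apply_self _ _), MvPolynomial.rename_id_apply]

lemma swapA_Aa_self (i : ℕ) : swapA i (Aa i) = Aa (i + 1) := by
  simp [swapA, Aa]

lemma swapA_Aa_succ (i : ℕ) : swapA i (Aa (i + 1)) = Aa i := by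
  simp [swapA, Aa]

lemma swapA_Aa_of_ne {i j : ℕ} (hj : 1 ≤ j) (h₁ : j ≠ i) (h₂ : j ≠ i + 1) :
    swapA i (Aa j) = Aa j := by
  rw [swapA_apply, Aa, MvPolynomial.rename_X, Equiv.swap_apply_of_ne_of_ne] <;>
    simp only [ne_eq, Var.a.injEq] <;> omega

lemma toF_Aa_sub_Aa_succ_ne_zero {i : ℕ} (hi : 1 ≤ i) :
    toF (Aa i) - toF (Aa (i + 1)) ≠ 0 := by
  rw [sub_ne_zero, toF, (IsFractionRing.injective R F).ne_iff, Aa, Aa, Ne,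
    MvPolynomial.X_injective.eq_iff]
  simp only [Var.a.injEq]
  omega

lemma dd_toF_of_sub_eq_mul {i : ℕ} (hi : 1 ≤ i) {M N : R}
    (h : M - swapA i M = N * (Aa i - Aa (i + 1))) : dd i (toF M) = toF N := by
  rw [dd, swapAF_toF, ← map_sub, h, map_mul, map_sub, mul_div_cancel_right₀ _
    (toF_Aa_sub_Aa_succ_ne_zero hi)]

lemma dd_toF_swapA (i : ℕ) (g : R) : dd i (toF (swapA i g)) = -dd i (toF g) := by
  simp only [dd, swapAF_toF, swapA_swapA, ← neg_div, neg_sub]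

lemma dd_add (i : ℕ) (f g : F) : dd i (f + g) = dd i f + dd i g := by
  simp only [dd, map_add, add_sub_add_comm, add_div]

lemma dd_toF_mul {i : ℕ} {g : R} (hg : swapA i g = g) (f : F) :
    dd i (toF g * f) = toF g * dd i f := by
  rw [dd, dd, map_mul, swapAF_toF, hg, ← mul_sub, mul_div_assoc]

lemma ddWord_append_singleton (l : List ℕ) (i : ℕ) (f : F) :
    ddWord (l ++ [i]) f = ddWord l (dd i f) := by
  induction l with
  | nil => rfl
  | cons j l ih => exact congrArg (dd j) ih

lemma ddWord_add (l : List ℕ) (f g : F) : ddWord l (f + g) = ddWord l f + ddWord l g := by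
  induction l with
  | nil => rfl
  | cons i l ih => simp only [ddWord, ih, dd_add]

lemma ddWord_sum {ι : Type*} (l : List ℕ) (s : Finset ι) (f : ι → F) :
    ddWord l (∑ t ∈ s, f t) = ∑ t ∈ s, ddWord l (f t) :=
  map_sum (AddMonoidHom.mk' (ddWord l) (ddWord_add l)) f s

lemma ddWord_neg (l : List ℕ) (f : F) : ddWord l (-f) = -ddWord l f :=
  map_neg (AddMonoidHom.mk' (ddWord l) (ddWord_add l)) f

lemma ddWord_toF_mul {l : List ℕ} {g : R} (hg : ∀ j ∈ l, swapA j g = g) (f : F) :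
    ddWord l (toF g * f) = toF g * ddWord l f := by
  induction l with
  | nil => rfl
  | cons i l ih =>
    simp only [List.forall_mem_cons] at hg
    simp only [ddWord, ih hg.2, dd_toF_mul hg.1]

lemma pow_mul_pow_sub_pow_mul_pow {S : Type*} [CommRing S] (x y : S) {p q : ℕ} (h : q ≤ p) :
    x ^ p * y ^ q - x ^ q * y ^ p =
      (∑ t ∈ range (p - q), x ^ (q + t) * y ^ (p - 1 - t)) * (x - y) := by
  obtain ⟨d, rfl⟩ := Nat.exists_eq_add_of_le h
  have hterm : ∀ t ∈ range d, x ^ (q + t) * y ^ (q + d - 1 - t) =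
      (x * y) ^ q * (x ^ t * y ^ (d - 1 - t)) := fun t ht => by
    rw [show q + d - 1 - t = q + (d - 1 - t) by have := mem_range.mp ht; omega]
    ring
  rw [Nat.add_sub_cancel_left, sum_congr rfl hterm, ← mul_sum, mul_assoc, geom_sum₂_mul]
  ring

lemma dd_pow_mul_pow_mul {k p q : ℕ} (hk : 1 ≤ k) (hqp : q ≤ p) {g : R}
    (hg : swapA k g = g) :
    dd k (toF (Aa k ^ p * Aa (k + 1) ^ q * g)) =
      ∑ t ∈ range (p - q), toF (Aa k ^ (q + t) * Aa (k + 1) ^ (p - 1 - t) * g) := by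
  rw [← map_sum]
  refine dd_toF_of_sub_eq_mul hk ?_
  simp only [map_mul, map_pow, swapA_Aa_self, swapA_Aa_succ, hg, ← sum_mul]
  linear_combination g * pow_mul_pow_sub_pow_mul_pow (Aa k) (Aa (k + 1)) hqp

lemma dd_pow_mul_pow_mul_antisymm (k p q : ℕ) {g : R} (hg : swapA k g = g) :
    dd k (toF (Aa k ^ p * Aa (k + 1) ^ q * g)) =
      -dd k (toF (Aa k ^ q * Aa (k + 1) ^ p * g)) := by
  rw [← dd_toF_swapA]
  congr 2
  simp only [map_mul, map_pow, swapA_Aa_self, swapA_Aa_succ, hg]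
  ring

/-- The word `[k + m - 1, …, k + 1, k]`, so that
`ddWord (descWord k m) = ∂_{k+m-1} ∘ ⋯ ∘ ∂_{k+1} ∘ ∂_k`. -/
def descWord (k m : ℕ) : List ℕ := (List.range m).map fun t => k + m - 1 - t

lemma descWord_succ (k m : ℕ) : descWord k (m + 1) = descWord (k + 1) m ++ [k] := by
  simp only [descWord, List.range_succ, List.map_append, List.map_singleton]
  congr 1
  · exact List.map_congr_left fun t _ => by omega
  · simp

lemma mem_descWord {k m j : ℕ} (hj : j ∈ descWord k m) : k ≤ j ∧ j < k + m := by
  simp only [descWord, List.mem_map, List.mem_range] at hj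
  omega

lemma ddWord_dd_pow_mul_pow_mul_of_le {l : List ℕ} {k m p q : ℕ} (hk : 1 ≤ k) {g : R}
    (hg : swapA k g = g) (hl : ∀ j ∈ l, swapA j (Aa k) = Aa k) {T : F}
    (hword : ∀ e ≤ m, ddWord l (toF (Aa (k + 1) ^ e * g)) = if e = m then T else 0)
    (hqp : q ≤ p) (hp : p ≤ m + 1) (hq : q ≤ m) :
    ddWord l (dd k (toF (Aa k ^ p * Aa (k + 1) ^ q * g))) =
      if p = m + 1 then toF (Aa k ^ q) * T else 0 := by
  have hterm : ∀ c, ∀ e ≤ m, ddWord l (toF (Aa k ^ c * Aa (k + 1) ^ e * g)) =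
      if e = m then toF (Aa k ^ c) * T else 0 := fun c e he => by
    have hfixed : ∀ j ∈ l, swapA j (Aa k ^ c) = Aa k ^ c := fun j hj => by
      rw [map_pow, hl j hj]
    rw [mul_assoc, map_mul, ddWord_toF_mul hfixed, hword e he, mul_ite, mul_zero]
  rw [dd_pow_mul_pow_mul hk hqp hg, ddWord_sum]
  split_ifs with h
  · rw [sum_eq_single_of_mem 0 (mem_range.mpr (by omega)), hterm _ _ (by omega),
      if_pos (by omega), add_zero]
    intro t ht ht0
    rw [mem_range] at ht
    rw [hterm _ _ (by omega), if_neg (by omega)]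
  · refine sum_eq_zero fun t ht => ?_
    rw [mem_range] at ht
    rw [hterm _ _ (by omega), if_neg (by omega)]

lemma ddWord_dd_pow_mul_pow_mul {l : List ℕ} {k m p q : ℕ} (hk : 1 ≤ k) {g : R}
    (hg : swapA k g = g) (hl : ∀ j ∈ l, swapA j (Aa k) = Aa k) {T : F}
    (hword : ∀ e ≤ m, ddWord l (toF (Aa (k + 1) ^ e * g)) = if e = m then T else 0)
    (hp : p ≤ m + 1) (hq : q ≤ m) :
    ddWord l (dd k (toF (Aa k ^ p * Aa (k + 1) ^ q * g))) =
      if p = m + 1 then toF (Aa k ^ q) * T else 0 := by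
  rcases le_total q p with hqp | hpq
  · exact ddWord_dd_pow_mul_pow_mul_of_le hk hg hl hword hqp hp hq
  · rw [dd_pow_mul_pow_mul_antisymm k p q hg, ddWord_neg,
      ddWord_dd_pow_mul_pow_mul_of_le hk hg hl hword hpq (by omega) (by omega),
      if_neg (by omega), if_neg (by omega), neg_zero]

theorem ddWord_descWord_pow_mul_prod (m : ℕ) {k p : ℕ} (hk : 1 ≤ k) (hp : p ≤ m)
    {β : ℕ → ℕ} (hβ : ∀ i ∈ Ioc k (k + m), β i ≤ k + m - i) :
    ddWord (descWord k m) (toF (Aa k ^ p * ∏ i ∈ Ioc k (k + m), Aa i ^ β i)) =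
      if p = m then toF (∏ i ∈ Ico k (k + m), Aa i ^ β (i + 1)) else 0 := by
  induction m generalizing k p with
  | zero => simp [Nat.le_zero.mp hp, descWord, ddWord]
  | succ m ih =>
    have hk' : k + (m + 1) = k + 1 + m := by omega
    set rest := ∏ i ∈ Ioc (k + 1) (k + 1 + m), Aa i ^ β i
    have hrest : swapA k rest = rest := by
      rw [map_prod]
      refine prod_congr rfl fun i hi => ?_
      rw [mem_Ioc] at hi
      rw [map_pow, swapA_Aa_of_ne (by omega) (by omega) (by omega)]
    have hsplit : ∏ i ∈ Ioc k (k + (m + 1)), Aa i ^ β i = Aa (k + 1) ^ β (k + 1) * rest := by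
      rw [hk', ← Icc_add_one_left_eq_Ioc, ← mul_prod_Ioc_eq_prod_Icc (by omega)]
    have htarget : toF (∏ i ∈ Ico k (k + (m + 1)), Aa i ^ β (i + 1)) =
        toF (Aa k ^ β (k + 1)) * toF (∏ i ∈ Ico (k + 1) (k + 1 + m), Aa i ^ β (i + 1)) := by
      rw [hk', prod_eq_prod_Ico_succ_bot (by omega), map_mul]
    have hβ' : ∀ i ∈ Ioc (k + 1) (k + 1 + m), β i ≤ k + 1 + m - i := fun i hi => by
      rw [mem_Ioc] at hi
      have := hβ i (mem_Ioc.mpr (by omega))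
      omega
    have hq : β (k + 1) ≤ m := by
      have := hβ (k + 1) (by simp)
      omega
    rw [descWord_succ, ddWord_append_singleton, hsplit, ← mul_assoc, htarget]
    refine ddWord_dd_pow_mul_pow_mul hk hrest (fun j hj => ?_) (fun e he => ih (by omega) he hβ')
      hp hq
    have := mem_descWord hj
    exact swapA_Aa_of_ne (by omega) (by omega) (by omega)

theorem divided_difference_monomial_general (n : ℕ) (β : ℕ → ℕ)
    (hβ : ∀ i, 2 ≤ i → i ≤ n → β i ≤ n - i) :
    (β 1 < n - 1 →
      ddWord ((List.range (n - 1)).map fun t => n - 1 - t)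
        (toF (∏ i ∈ Finset.Icc 1 n, Aa i ^ β i)) = 0) ∧
    (β 1 = n - 1 →
      ddWord ((List.range (n - 1)).map fun t => n - 1 - t)
        (toF (∏ i ∈ Finset.Icc 1 n, Aa i ^ β i)) =
      toF (∏ i ∈ Finset.Icc 1 (n - 1), Aa i ^ β (i + 1))) := by
  cases n with
  | zero => simp [ddWord]
  | succ m =>
    have hword : ((List.range (m + 1 - 1)).map fun t => m + 1 - 1 - t) = descWord 1 m := by
      simp [descWord, add_comm]
    have hmonomial : ∏ i ∈ Icc 1 (m + 1), Aa i ^ β i =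
        Aa 1 ^ β 1 * ∏ i ∈ Ioc 1 (1 + m), Aa i ^ β i := by
      rw [add_comm m 1, ← mul_prod_Ioc_eq_prod_Icc (by omega)]
    have htarget : Icc 1 (m + 1 - 1) = Ico 1 (1 + m) := by
      rw [Nat.add_sub_cancel, add_comm, Ico_add_one_right_eq_Icc]
    have hβ' : ∀ i ∈ Ioc 1 (1 + m), β i ≤ 1 + m - i := fun i hi => by
      rw [mem_Ioc] at hi
      have := hβ i (by omega) (by omega)
      omega
    rw [hword, hmonomial, htarget]
    refine ⟨fun h => ?_, fun h => ?_⟩ <;>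
      rw [ddWord_descWord_pow_mul_prod m le_rfl (by omega) hβ']
    · exact if_neg h.ne
    · exact if_pos h

/-- let `β = (β_1,…,β_n)` with `β_i ≤ n - i` for `2 ≤ i ≤ n`.  Then
`∂_{n-1}^a ⋯ ∂_2^a ∂_1^a (a^β) = 0` if `β_1 < n-1`, and
`∂_{n-1}^a ⋯ ∂_2^a ∂_1^a (a^β) = a_1^{β_2} a_2^{β_3} ⋯ a_{n-1}^{β_n}` if `β_1 = n-1`. -/
theorem divided_difference_monomial (n : ℕ) (hn : 1 ≤ n) (β : ℕ → ℕ)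
    (hβ : ∀ i, 2 ≤ i → i ≤ n → β i ≤ n - i) :
    (β 1 < n - 1 →
      ddWord ((List.range (n - 1)).map fun t => n - 1 - t)
        (toF (∏ i ∈ Finset.Icc 1 n, Aa i ^ β i)) = 0) ∧
    (β 1 = n - 1 →
      ddWord ((List.range (n - 1)).map fun t => n - 1 - t)
        (toF (∏ i ∈ Finset.Icc 1 n, Aa i ^ β i)) =
      toF (∏ i ∈ Finset.Icc 1 (n - 1), Aa i ^ β (i + 1))) :=
  divided_difference_monomial_general n β hβ
end
end
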